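/- arXiv:1810.04875 — 5 statements merged into one kernel-verified Lean document; each statement's English description precedes it below -/
import Mathlib

section
/- For the single-server queue X_0 = 0, X_{t+1} = (X_t - 1)_+ + A_{t+1} with i.i.d. arrivals of generating function A, the generating function of the probability that the queue is empty satisfies Σ_{t≥0} P(X_t = 0) z^t = 1/(1 - T_A(z)), where T_A is the unique power series with T_A(0)=0 and T_A(z) = z·A(T_A(z)). -/
/-!
Write `G_t(z) = 𝔼[z ^ X_t]` and `Â(z) = ∑ aₙ zⁿ`. Since `X_t` is a function of `A_0, …, A_t`, it is
independent of `A_{t+1}`, so `G_{t+1}(z) = 𝔼[z ^ (X_t - 1)₊] · Â(z)`; with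
`z · z ^ (n - 1)₊ = z ^ n - (1 - z) · [n = 0]` this becomes
`y · G_{t+1}(z) = G_t(z) - (1 - z) · P(X_t = 0)` whenever `z = y · Â(z)`. Taking `z = T_A(y)`, which
lies in `[0, 1)` by the intermediate value theorem, and summing against `yᵗ` telescopes to
`(1 - z) · ∑ₜ P(X_t = 0) yᵗ = G_0(z) = 1`.
-/

open MeasureTheory ProbabilityTheory

section GeneratingFunction

variable {Ω : Type*} [MeasurableSpace Ω] {μ : Measure Ω} [IsProbabilityMeasure μ]
  {f : Ω → ℕ} {z : ℝ}

lemma norm_pow_le_one_of_abs_le_one (hz : |z| ≤ 1) (n : ℕ) : ‖z ^ n‖ ≤ 1 := by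
  simpa [abs_pow] using pow_le_one₀ (n := n) (abs_nonneg z) hz

lemma integrable_pow_comp (hf : Measurable f) (hz : |z| ≤ 1) :
    Integrable (fun ω => z ^ f ω) μ :=
  .of_bound ((measurable_of_countable (z ^ ·)).comp hf).aestronglyMeasurable 1
    (.of_forall fun ω => norm_pow_le_one_of_abs_le_one hz (f ω))

lemma abs_integral_pow_comp_le_one (hz : |z| ≤ 1) : |∫ ω, z ^ f ω ∂μ| ≤ 1 := by
  simpa using norm_integral_le_of_norm_le_const (μ := μ)
    (.of_forall fun ω => norm_pow_le_one_of_abs_le_one hz (f ω))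

lemma integral_pow_comp_eq_tsum (hf : Measurable f) (hz : |z| ≤ 1) :
    ∫ ω, z ^ f ω ∂μ = ∑' n, (μ {ω | f ω = n}).toReal * z ^ n := by
  have := Measure.isProbabilityMeasure_map (μ := μ) hf.aemeasurable
  rw [← integral_map hf.aemeasurable (measurable_of_countable (z ^ ·)).aestronglyMeasurable,
    integral_countable (integrable_pow_comp (f := fun n : ℕ => n) measurable_id hz)]
  refine tsum_congr fun n => ?_
  rw [smul_eq_mul, measureReal_def, Measure.map_apply hf (measurableSet_singleton n)]
  rfl

lemma mul_integral_pow_pred_comp (hf : Measurable f) (hz : |z| ≤ 1) :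
    z * ∫ ω, z ^ (f ω - 1) ∂μ = ∫ ω, z ^ f ω ∂μ - (1 - z) * (μ {ω | f ω = 0}).toReal := by
  have hpt : ∀ ω, z * z ^ (f ω - 1) = z ^ f ω - (1 - z) * {ω | f ω = 0}.indicator 1 ω := by
    intro ω
    rcases h : f ω with _ | n <;> simp [Set.indicator, h, pow_succ, mul_comm]
  have h0 : MeasurableSet {ω | f ω = 0} := hf (measurableSet_singleton 0)
  rw [← integral_const_mul, funext hpt, integral_sub (integrable_pow_comp hf hz),
    integral_const_mul, integral_indicator_one h0, measureReal_def]
  exact ((integrable_const _).indicator h0).const_mul _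

end GeneratingFunction

lemma tsum_mul_pow_eq_of_telescoping {G p : ℕ → ℝ} {y c : ℝ} (hy : |y| < 1) (hc : c ≠ 0)
    (hG : ∀ t, |G t| ≤ 1) (hG0 : G 0 = 1) (hrec : ∀ t, y * G (t + 1) = G t - c * p t) :
    ∑' t, p t * y ^ t = 1 / c := by
  have hGsum : Summable fun t => G t * y ^ t :=
    .of_norm_bounded (summable_geometric_of_lt_one (abs_nonneg y) hy) fun t => by
      rw [norm_mul, norm_pow, Real.norm_eq_abs]
      exact mul_le_of_le_one_left (pow_nonneg (abs_nonneg y) t) (hG t)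
  have hterm : ∀ t, c * (p t * y ^ t) = G t * y ^ t - G (t + 1) * y ^ (t + 1) := fun t => by
    rw [pow_succ]; linear_combination (y ^ t) * hrec t
  rw [eq_div_iff hc, mul_comm, ← tsum_mul_left, tsum_congr hterm,
    hGsum.tsum_sub ((summable_nat_add_iff 1).2 hGsum)]
  simp [hGsum.tsum_eq_zero_add, hG0]

lemma tsum_mul_pow_lt_one_of_fixedPoint {tc a : ℕ → ℝ} (htc : ∀ n, 0 ≤ tc n)
    (htcsum : Summable tc) (ha : ∑' n, a n = 1)
    (hfix : ∀ x ∈ Set.Icc (0 : ℝ) 1,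
      (∑' n, tc n * x ^ n) = x * ∑' n, a n * (∑' k, tc k * x ^ k) ^ n)
    {y : ℝ} (hy : y ∈ Set.Ico 0 1) :
    ∑' n, tc n * y ^ n < 1 := by
  set T : ℝ → ℝ := fun x => ∑' n, tc n * x ^ n
  have hT0 : T 0 = 0 := by simpa using hfix 0 (by simp)
  have hcont : ContinuousOn T (Set.Icc 0 1) :=
    continuousOn_tsum (fun n => by fun_prop) htcsum fun n x hx => by
      rw [norm_mul, norm_pow, Real.norm_of_nonneg (htc n), Real.norm_of_nonneg hx.1]
      exact mul_le_of_le_one_right (htc n) (pow_le_one₀ hx.1 hx.2)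
  by_contra! hle
  obtain ⟨x, hx, hTx⟩ :=
    intermediate_value_Icc hy.1 (hcont.mono (Set.Icc_subset_Icc_right hy.2.le))
    (show (1 : ℝ) ∈ Set.Icc (T 0) (T y) from ⟨hT0.le.trans zero_le_one, hle⟩)
  have := hfix x ⟨hx.1, hx.2.trans hy.2.le⟩
  simp only [T] at hTx
  simp only [hTx, one_pow, mul_one, ha] at this
  linarith [hx.2, hy.2]

section Lindley

variable {Ω : Type*} {A X : ℕ → Ω → ℕ}

lemma measurable_lindley_past [MeasurableSpace Ω] (hX0 : ∀ ω, X 0 ω = 0)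
    (hXrec : ∀ t ω, X (t + 1) ω = (X t ω - 1) + A (t + 1) ω) (t : ℕ) :
    Measurable[⨆ i ∈ Set.Iic t, MeasurableSpace.comap (A i) inferInstance] (X t) := by
  induction t with
  | zero =>
    simp only [funext hX0]
    exact measurable_const
  | succ t ih =>
    rw [funext (hXrec t)]
    refine Measurable.add ?_ ?_
    · refine (measurable_of_countable (· - 1)).comp (ih.mono ?_ le_rfl)
      exact biSup_mono fun i hi => le_trans hi (Nat.le_succ t)
    · exact (comap_measurable (A (t + 1))).mono
        (le_iSup₂_of_le (t + 1) (Set.mem_Iic.2 le_rfl) le_rfl) le_rfl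

variable [MeasurableSpace Ω] {μ : Measure Ω}

lemma measurable_lindley (hmeas : ∀ t, Measurable (A t)) (hX0 : ∀ ω, X 0 ω = 0)
    (hXrec : ∀ t ω, X (t + 1) ω = (X t ω - 1) + A (t + 1) ω) (t : ℕ) : Measurable (X t) :=
  (measurable_lindley_past hX0 hXrec t).mono (iSup₂_le fun i _ => (hmeas i).comap_le) le_rfl

lemma indepFun_lindley_arrival (hmeas : ∀ t, Measurable (A t)) (hindep : iIndepFun A μ)
    (hX0 : ∀ ω, X 0 ω = 0) (hXrec : ∀ t ω, X (t + 1) ω = (X t ω - 1) + A (t + 1) ω) (t : ℕ) :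
    IndepFun (X t) (A (t + 1)) μ := by
  rw [IndepFun_iff_Indep]
  refine indep_of_indep_of_le (indep_iSup_of_disjoint (fun i => (hmeas i).comap_le) hindep.iIndep
    (S := Set.Iic t) (T := {t + 1}) (by simp)) (measurable_lindley_past hX0 hXrec t).comap_le ?_
  exact le_iSup₂_of_le (t + 1) rfl le_rfl

lemma integral_pow_lindley_succ [IsProbabilityMeasure μ] (hmeas : ∀ t, Measurable (A t))
    (hindep : iIndepFun A μ) (hid : ∀ t, μ.map (A t) = μ.map (A 0)) (hX0 : ∀ ω, X 0 ω = 0)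
    (hXrec : ∀ t ω, X (t + 1) ω = (X t ω - 1) + A (t + 1) ω) (z : ℝ) (t : ℕ) :
    ∫ ω, z ^ X (t + 1) ω ∂μ = (∫ ω, z ^ (X t ω - 1) ∂μ) * ∫ ω, z ^ A 0 ω ∂μ := by
  have hpow : Measurable (z ^ · : ℕ → ℝ) := measurable_of_countable _
  simp only [hXrec, pow_add]
  rw [(indepFun_lindley_arrival hmeas hindep hX0 hXrec t).integral_fun_comp_mul_comp
      (f := fun n => z ^ (n - 1)) (g := (z ^ ·))
      (measurable_lindley hmeas hX0 hXrec t).aemeasurable (hmeas _).aemeasurable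
      (measurable_of_countable _).aestronglyMeasurable hpow.aestronglyMeasurable,
    ← integral_map (hmeas _).aemeasurable hpow.aestronglyMeasurable, hid,
    integral_map (hmeas _).aemeasurable hpow.aestronglyMeasurable]

end Lindley

theorem single_queue_empty_gf_general {Ω : Type*} [MeasurableSpace Ω] (μ : Measure Ω)
    [IsProbabilityMeasure μ]
    (A : ℕ → Ω → ℕ) (hmeas : ∀ t, Measurable (A t))
    (hindep : iIndepFun A μ)
    (hid : ∀ t, μ.map (A t) = μ.map (A 0))
    (X : ℕ → Ω → ℕ)
    (hX0 : ∀ ω, X 0 ω = 0)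
    (hXrec : ∀ t ω, X (t + 1) ω = (X t ω - 1) + A (t + 1) ω)
    (a : ℕ → ℝ) (ha : ∀ n, a n = (μ {ω | A 0 ω = n}).toReal)
    (tc : ℕ → ℝ) (htcpos : ∀ n, 0 ≤ tc n)
    (htcsum : ∀ z ∈ Set.Icc (0 : ℝ) 1, Summable fun n => tc n * z ^ n)
    (hfix : ∀ z ∈ Set.Icc (0 : ℝ) 1,
      (∑' n, tc n * z ^ n) = z * ∑' n, a n * (∑' k, tc k * z ^ k) ^ n) :
    ∀ z ∈ Set.Ioo (0 : ℝ) 1,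
      (∑' t : ℕ, (μ {ω | X t ω = 0}).toReal * z ^ t)
        = 1 / (1 - ∑' n, tc n * z ^ n) := by
  rintro y ⟨hy0, hy1⟩
  have hA : ∀ z : ℝ, |z| ≤ 1 → ∑' n, a n * z ^ n = ∫ ω, z ^ A 0 ω ∂μ := fun z hz => by
    simp only [ha, integral_pow_comp_eq_tsum (hmeas 0) hz]
  have hz0 : 0 ≤ ∑' n, tc n * y ^ n :=
    tsum_nonneg fun n => mul_nonneg (htcpos n) (pow_nonneg hy0.le n)
  have hz1 : ∑' n, tc n * y ^ n < 1 :=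
    tsum_mul_pow_lt_one_of_fixedPoint htcpos (by simpa using htcsum 1 (by simp))
      (by simpa using hA 1 (by simp)) hfix ⟨hy0.le, hy1⟩
  set z := ∑' n, tc n * y ^ n
  have hz : |z| ≤ 1 := abs_le.2 ⟨by linarith, hz1.le⟩
  refine tsum_mul_pow_eq_of_telescoping (G := fun t => ∫ ω, z ^ X t ω ∂μ)
    (abs_lt.2 ⟨by linarith, hy1⟩) (sub_ne_zero.2 hz1.ne')
    (fun t => abs_integral_pow_comp_le_one hz) (by simp [hX0]) fun t => ?_
  rw [integral_pow_lindley_succ hmeas hindep hid hX0 hXrec, ← hA z hz, mul_left_comm,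
    ← hfix y ⟨hy0.le, hy1.le⟩, mul_comm,
    mul_integral_pow_pred_comp (measurable_lindley hmeas hX0 hXrec t) hz]

/-- for the single-server queue `X 0 = 0`, `X (t+1) = (X t - 1)₊ + A (t+1)`
with i.i.d. arrivals of generating function `A`, the generating function of the empty-queue
probabilities satisfies `∑ₜ P(X t = 0) zᵗ = 1 / (1 - T_A(z))`, where `T_A` is the power
series with nonnegative coefficients, zero constant term, satisfying `T_A(z) = z·A(T_A(z))`. -/
theorem single_queue_empty_gf {Ω : Type*} [MeasurableSpace Ω] (μ : Measure Ω)
    [IsProbabilityMeasure μ]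
    (A : ℕ → Ω → ℕ) (hmeas : ∀ t, Measurable (A t))
    (hindep : iIndepFun A μ)
    (hid : ∀ t, μ.map (A t) = μ.map (A 0))
    (X : ℕ → Ω → ℕ)
    (hX0 : ∀ ω, X 0 ω = 0)
    (hXrec : ∀ t ω, X (t + 1) ω = (X t ω - 1) + A (t + 1) ω)
    (a : ℕ → ℝ) (ha : ∀ n, a n = (μ {ω | A 0 ω = n}).toReal)
    (tc : ℕ → ℝ) (htc0 : tc 0 = 0) (htcpos : ∀ n, 0 ≤ tc n)
    (htcsum : ∀ z ∈ Set.Icc (0 : ℝ) 1, Summable fun n => tc n * z ^ n)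
    (hfix : ∀ z ∈ Set.Icc (0 : ℝ) 1,
      (∑' n, tc n * z ^ n) = z * ∑' n, a n * (∑' k, tc k * z ^ k) ^ n) :
    ∀ z ∈ Set.Ioo (0 : ℝ) 1,
      (∑' t : ℕ, (μ {ω | X t ω = 0}).toReal * z ^ t)
        = 1 / (1 - ∑' n, tc n * z ^ n) :=
  single_queue_empty_gf_general μ A hmeas hindep hid X hX0 hXrec a ha tc htcpos htcsum hfix
end

section
/- For the single-server queue with i.i.d. arrivals of generating function A, the full bivariate generating function equals Φ(u,z) = (1 + z A(u)(1 - 1/u)/(1 - T_A(z))) / (1 - z A(u)/u) for u ≠ 0 in the domain of convergence, where T_A(z) = z A(T_A(z)), T_A(0)=0. -/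
/-!
With `g_t(x) = E[x ^ X_t]`, independence of `X_t` and `A_{t+1}` gives
`g_{t+1}(x) = E[x ^ (X_t - 1)₊] A(x)`, while `x E[x ^ (X_t - 1)₊] = g_t(x) - (1 - x) P(X_t = 0)`.
Summing against `z ^ t` gives the kernel equation
`Φ(x, z) (x - z A(x)) = x - z A(x) (1 - x) Φ₀(z)` with `Φ₀(z) = ∑ₜ P(X_t = 0) z ^ t`.
The kernel `x - z A(x)` vanishes at `x = T_A(z)`, which lies in `[0, 1)` because `T_A` is
continuous, `T_A(0) = 0` and `T_A(y) = 1` would force `1 = y A(1) = y`; this pins down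
`Φ₀(z) = 1 / (1 - T_A(z))`.
-/

open MeasureTheory ProbabilityTheory

lemma continuousOn_tsum_mul_pow {c : ℕ → ℝ} (hc : Summable fun n => ‖c n‖) :
    ContinuousOn (fun y => ∑' n, c n * y ^ n) (Set.Icc (-1) 1) :=
  continuousOn_tsum (fun n => (continuous_const.mul (continuous_pow n)).continuousOn) hc
    fun n y hy => by
      rw [norm_mul, norm_pow]
      exact mul_le_of_le_one_right (norm_nonneg _) (pow_le_one₀ (norm_nonneg y) (abs_le.2 hy))

lemma lt_of_continuousOn_Icc_of_forall_ne {f : ℝ → ℝ} {a b c : ℝ} (hab : a ≤ b)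
    (hf : ContinuousOn f (Set.Icc a b)) (ha : f a < c) (hne : ∀ y ∈ Set.Icc a b, f y ≠ c) :
    f b < c := by
  by_contra! hb
  obtain ⟨y, hy, hyc⟩ := intermediate_value_Icc hab hf ⟨ha.le, hb⟩
  exact hne y hy hyc

lemma tsum_mul_pow_lt_one_of_eq_mul_tsum {c a : ℕ → ℝ} (hc : ∀ n, 0 ≤ c n) (hcs : Summable c)
    (ha : ∑' n, a n = 1)
    (hfix : ∀ y ∈ Set.Icc (0 : ℝ) 1, ∑' n, c n * y ^ n = y * ∑' n, a n * (∑' k, c k * y ^ k) ^ n)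
    {z : ℝ} (hz : z ∈ Set.Ico (0 : ℝ) 1) :
    ∑' n, c n * z ^ n < 1 := by
  have hcont : ContinuousOn (fun y => ∑' n, c n * y ^ n) (Set.Icc 0 z) :=
    (continuousOn_tsum_mul_pow (by simpa [abs_of_nonneg (hc _)] using hcs)).mono
      (Set.Icc_subset_Icc (by norm_num) hz.2.le)
  refine lt_of_continuousOn_Icc_of_forall_ne hz.1 hcont ?_ fun y hy hy1 => ?_
  · rw [hfix 0 ⟨le_rfl, zero_le_one⟩, zero_mul]
    exact one_pos
  · have := hfix y ⟨hy.1, hy.2.trans hz.2.le⟩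
    simp only [hy1, one_pow, mul_one, ha] at this
    linarith [hy.2, hz.2]

lemma tsum_mul_pow_mul_sub_eq_of_recurrence {g q : ℕ → ℝ} {x α z : ℝ}
    (hg : Summable fun t => g t * z ^ t) (hq : Summable fun t => q t * z ^ t) (h0 : g 0 = 1)
    (hrec : ∀ t, x * g (t + 1) = α * (g t + (x - 1) * q t)) :
    (∑' t, g t * z ^ t) * (x - z * α) = x + z * α * (x - 1) * ∑' t, q t * z ^ t := by
  have hshift : ∑' t, g t * z ^ t = 1 + z * ∑' t, g (t + 1) * z ^ t := by
    rw [hg.tsum_eq_zero_add, h0, ← tsum_mul_left]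
    simp only [pow_zero, mul_one, pow_succ]
    congr 1; exact tsum_congr fun t => by ring
  have hstep : x * ∑' t, g (t + 1) * z ^ t
      = α * (∑' t, g t * z ^ t + (x - 1) * ∑' t, q t * z ^ t) := by
    rw [← tsum_mul_left, ← tsum_mul_left, ← hg.tsum_add (hq.mul_left _), ← tsum_mul_left]
    exact tsum_congr fun t => by linear_combination z ^ t * hrec t
  linear_combination x * hshift + z * hstep

section PowerMoment
variable {Ω : Type*} [MeasurableSpace Ω] {μ : Measure Ω} [IsFiniteMeasure μ] {Y : Ω → ℕ} {x : ℝ}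

lemma integrable_pow_comp_s7 (hY : Measurable Y) (hx : |x| ≤ 1) :
    Integrable (fun ω => x ^ Y ω) μ :=
  .of_bound ((measurable_of_countable (x ^ · : ℕ → ℝ)).comp hY).aestronglyMeasurable 1
    (ae_of_all _ fun ω => by simpa [abs_pow] using pow_le_one₀ (abs_nonneg x) hx)

lemma tsum_measure_toReal_mul_pow (hY : Measurable Y) (hx : |x| ≤ 1) :
    ∑' n, (μ {ω | Y ω = n}).toReal * x ^ n = ∫ ω, x ^ Y ω ∂μ := by
  have hint : Integrable (x ^ · : ℕ → ℝ) (μ.map Y) := by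
    rw [integrable_map_measure (measurable_of_countable _).aestronglyMeasurable hY.aemeasurable]
    exact integrable_pow_comp_s7 hY hx
  rw [← integral_map hY.aemeasurable (measurable_of_countable _).aestronglyMeasurable,
    integral_countable hint]
  refine tsum_congr fun n => ?_
  rw [measureReal_def, Measure.map_apply hY (measurableSet_singleton n), smul_eq_mul]
  rfl

lemma abs_integral_pow_le_one [IsProbabilityMeasure μ] (hx : |x| ≤ 1) :
    |∫ ω, x ^ Y ω ∂μ| ≤ 1 := by
  simpa using norm_integral_le_of_norm_le_const (μ := μ) (f := fun ω => x ^ Y ω) (C := 1)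
    (ae_of_all _ fun ω => by simpa [abs_pow] using pow_le_one₀ (abs_nonneg x) hx)

lemma integral_zero_pow (hY : Measurable Y) :
    ∫ ω, (0 : ℝ) ^ Y ω ∂μ = (μ {ω | Y ω = 0}).toReal := by
  rw [← tsum_measure_toReal_mul_pow hY (by simp), tsum_eq_single 0 fun n hn => by simp [hn]]
  simp

lemma mul_integral_pow_pred_add (hY : Measurable Y) (hx : |x| ≤ 1) :
    x * ∫ ω, x ^ (Y ω - 1) ∂μ + (μ {ω | Y ω = 0}).toReal
      = ∫ ω, x ^ Y ω ∂μ + x * (μ {ω | Y ω = 0}).toReal := by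
  have hs : MeasurableSet {ω | Y ω = 0} := hY (measurableSet_singleton 0)
  have hpred : Integrable (fun ω => x ^ (Y ω - 1)) μ :=
    integrable_pow_comp_s7 ((measurable_of_countable (· - 1 : ℕ → ℕ)).comp hY) hx
  have hind : Integrable ({ω | Y ω = 0}.indicator (1 : Ω → ℝ)) μ :=
    (integrable_const 1).indicator hs
  rw [← measureReal_def, ← integral_indicator_one hs, ← integral_const_mul, ← integral_const_mul,
    ← integral_add (hpred.const_mul x) hind, ← integral_add (integrable_pow_comp_s7 hY hx)
    (hind.const_mul x)]
  refine integral_congr_ae (ae_of_all _ fun ω => ?_)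
  dsimp only
  rcases Nat.eq_zero_or_pos (Y ω) with h | h
  · simp [h, add_comm]
  · have h' : ω ∉ {ω | Y ω = 0} := h.ne'
    rw [Set.indicator_of_notMem h', ← pow_succ', Nat.sub_add_cancel h]
    ring

end PowerMoment

section Queue
variable {Ω : Type*} [MeasurableSpace Ω] {A X : ℕ → Ω → ℕ}

omit [MeasurableSpace Ω] in
lemma measurable_queue_iSup_comap (hX0 : ∀ ω, X 0 ω = 0)
    (hXrec : ∀ t ω, X (t + 1) ω = (X t ω - 1) + A (t + 1) ω) (t : ℕ) :
    Measurable[⨆ i ∈ Set.Iic t, MeasurableSpace.comap (A i) inferInstance] (X t) := by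
  induction t with
  | zero => rw [funext hX0]; exact measurable_const
  | succ t ih =>
    rw [funext (hXrec t)]
    refine Measurable.add
      (m := ⨆ i ∈ Set.Iic (t + 1), MeasurableSpace.comap (A i) inferInstance) ?_ ?_
    · refine (measurable_of_countable (· - 1 : ℕ → ℕ)).comp (ih.mono ?_ le_rfl)
      exact biSup_mono fun i hi => Set.mem_Iic.2 (Nat.le_succ_of_le hi)
    · exact (comap_measurable _).mono (le_iSup₂ (f := fun i (_ : i ∈ Set.Iic (t + 1)) =>
        MeasurableSpace.comap (A i) inferInstance) (t + 1) (Set.mem_Iic.2 le_rfl)) le_rfl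

variable (hmeas : ∀ t, Measurable (A t)) (hX0 : ∀ ω, X 0 ω = 0)
  (hXrec : ∀ t ω, X (t + 1) ω = (X t ω - 1) + A (t + 1) ω)
include hmeas hX0 hXrec

lemma measurable_queue (t : ℕ) : Measurable (X t) :=
  (measurable_queue_iSup_comap hX0 hXrec t).mono (iSup₂_le fun i _ => (hmeas i).comap_le) le_rfl

lemma indepFun_queue_arrival {μ : Measure Ω} (hindep : iIndepFun A μ) (t : ℕ) :
    IndepFun (X t) (A (t + 1)) μ := by
  rw [IndepFun_iff_Indep]
  have hdisj : Disjoint (Set.Iic t) {t + 1} := by simp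
  refine indep_of_indep_of_le (indep_iSup_of_disjoint (fun i => (hmeas i).comap_le)
    hindep.iIndep hdisj) (measurable_queue_iSup_comap hX0 hXrec t).comap_le ?_
  exact le_iSup₂ (f := fun i (_ : i ∈ ({t + 1} : Set ℕ)) =>
    MeasurableSpace.comap (A i) inferInstance) (t + 1) rfl

variable {μ : Measure Ω} (hindep : iIndepFun A μ)
  (hid : ∀ t, μ.map (A t) = μ.map (A 0))
include hindep hid

lemma integral_pow_queue_succ (x : ℝ) (t : ℕ) :
    ∫ ω, x ^ X (t + 1) ω ∂μ = (∫ ω, x ^ (X t ω - 1) ∂μ) * ∫ ω, x ^ A 0 ω ∂μ := by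
  have hpow : Measurable (x ^ · : ℕ → ℝ) := measurable_of_countable _
  have hpred : Measurable fun n : ℕ => x ^ (n - 1) := measurable_of_countable _
  have hident : IdentDistrib (A (t + 1)) (A 0) μ μ :=
    ⟨(hmeas _).aemeasurable, (hmeas 0).aemeasurable, hid _⟩
  simp_rw [hXrec, pow_add]
  have hindep_t := (indepFun_queue_arrival hmeas hX0 hXrec hindep t).comp hpred hpow
  calc ∫ ω, x ^ (X t ω - 1) * x ^ A (t + 1) ω ∂μ
      = (∫ ω, x ^ (X t ω - 1) ∂μ) * ∫ ω, x ^ A (t + 1) ω ∂μ :=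
        hindep_t.integral_fun_mul_eq_mul_integral
          (hpred.comp (measurable_queue hmeas hX0 hXrec t)).aestronglyMeasurable
          (hpow.comp (hmeas _)).aestronglyMeasurable
    _ = (∫ ω, x ^ (X t ω - 1) ∂μ) * ∫ ω, x ^ A 0 ω ∂μ := congrArg _ (hident.comp hpow).integral_eq

variable [IsProbabilityMeasure μ]

lemma queue_gf_mul_sub_eq {x z : ℝ} (hx : |x| ≤ 1) (hz : |z| < 1) :
    (∑' t, (∑' n, (μ {ω | X t ω = n}).toReal * x ^ n) * z ^ t)
        * (x - z * ∑' n, (μ {ω | A 0 ω = n}).toReal * x ^ n)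
      = x + z * (∑' n, (μ {ω | A 0 ω = n}).toReal * x ^ n) * (x - 1)
          * ∑' t, (μ {ω | X t ω = 0}).toReal * z ^ t := by
  have hXm := measurable_queue hmeas hX0 hXrec
  simp_rw [tsum_measure_toReal_mul_pow (hXm _) hx, tsum_measure_toReal_mul_pow (hmeas 0) hx]
  have hgeom : Summable fun t => |z| ^ t := summable_geometric_of_lt_one (abs_nonneg z) hz
  refine tsum_mul_pow_mul_sub_eq_of_recurrence ?_ ?_ ?_ fun t => ?_
  · refine hgeom.of_norm_bounded fun t => ?_
    rw [norm_mul, norm_pow, Real.norm_eq_abs, Real.norm_eq_abs]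
    exact mul_le_of_le_one_left (by positivity) (abs_integral_pow_le_one hx)
  · refine hgeom.of_norm_bounded fun t => ?_
    rw [norm_mul, norm_pow, Real.norm_eq_abs, Real.norm_eq_abs, abs_of_nonneg ENNReal.toReal_nonneg]
    exact mul_le_of_le_one_left (by positivity) measureReal_le_one
  · simp [hX0]
  · rw [integral_pow_queue_succ hmeas hX0 hXrec hindep hid]
    linear_combination (∫ ω, x ^ A 0 ω ∂μ) * mul_integral_pow_pred_add (μ := μ) (hXm t) hx

lemma queue_tsum_idle_eq {z T : ℝ} (hz : z ∈ Set.Ioo (0 : ℝ) 1) (hT : T ∈ Set.Ico (0 : ℝ) 1)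
    (hfix : T = z * ∑' n, (μ {ω | A 0 ω = n}).toReal * T ^ n) :
    ∑' t, (μ {ω | X t ω = 0}).toReal * z ^ t = 1 / (1 - T) := by
  have hXm := measurable_queue hmeas hX0 hXrec
  rcases hT.1.eq_or_lt with rfl | hT0
  -- `T = 0` forces `P(A = 0) = 0`, so the queue is never empty after time `0`.
  · have hidle0 : (μ {ω | A 0 ω = 0}).toReal = 0 := by
      rw [← integral_zero_pow (hmeas 0), ← tsum_measure_toReal_mul_pow (hmeas 0) (by simp)]
      exact (mul_eq_zero.1 hfix.symm).resolve_left hz.1.ne'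
    have hbusy : ∀ t, (μ {ω | X (t + 1) ω = 0}).toReal = 0 := fun t => by
      rw [← integral_zero_pow (hXm _), integral_pow_queue_succ hmeas hX0 hXrec hindep hid,
        integral_zero_pow (hmeas 0), hidle0, mul_zero]
    rw [tsum_eq_single 0 fun t ht => ?_]
    · simp [hX0]
    · obtain ⟨t, rfl⟩ := Nat.exists_eq_succ_of_ne_zero ht
      simp [hbusy]
  · have h := queue_gf_mul_sub_eq hmeas hX0 hXrec hindep hid (x := T)
      (abs_le.2 ⟨by linarith, hT.2.le⟩) (abs_lt.2 ⟨by linarith [hz.1], hz.2⟩)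
    -- the kernel vanishes at `x = T`
    rw [← hfix, sub_self, mul_zero] at h
    have h1 : T * (1 - (1 - T) * ∑' t, (μ {ω | X t ω = 0}).toReal * z ^ t) = 0 := by
      linear_combination -h
    rw [eq_div_iff (sub_ne_zero.2 hT.2.ne')]
    linarith [(mul_eq_zero.1 h1).resolve_left hT0.ne']

end Queue

theorem single_queue_bivariate_gf_general {Ω : Type*} [MeasurableSpace Ω] (μ : Measure Ω)
    [IsProbabilityMeasure μ]
    (A : ℕ → Ω → ℕ) (hmeas : ∀ t, Measurable (A t))
    (hindep : iIndepFun A μ)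
    (hid : ∀ t, μ.map (A t) = μ.map (A 0))
    (X : ℕ → Ω → ℕ)
    (hX0 : ∀ ω, X 0 ω = 0)
    (hXrec : ∀ t ω, X (t + 1) ω = (X t ω - 1) + A (t + 1) ω)
    (a : ℕ → ℝ) (ha : ∀ n, a n = (μ {ω | A 0 ω = n}).toReal)
    (tc : ℕ → ℝ) (htcpos : ∀ n, 0 ≤ tc n)
    (htcsum : ∀ z ∈ Set.Icc (0 : ℝ) 1, Summable fun n => tc n * z ^ n)
    (hfix : ∀ z ∈ Set.Icc (0 : ℝ) 1,
      (∑' n, tc n * z ^ n) = z * ∑' n, a n * (∑' k, tc k * z ^ k) ^ n)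
    (Φ : ℝ → ℝ → ℝ)
    (hΦ : ∀ u z, Φ u z
      = ∑' t : ℕ, (∑' n : ℕ, (μ {ω | X t ω = n}).toReal * u ^ n) * z ^ t) :
    ∀ u ∈ Set.Ioo (0 : ℝ) 1, ∀ z ∈ Set.Ioo (0 : ℝ) 1,
      z * (∑' n, a n * u ^ n) / u ≠ 1 →
      Φ u z = (1 + z * (∑' n, a n * u ^ n) * (1 - 1 / u) / (1 - ∑' n, tc n * z ^ n))
                / (1 - z * (∑' n, a n * u ^ n) / u) := by
  intro u hu z hz hden
  have hA : ∀ x, ∑' n, a n * x ^ n = ∑' n, (μ {ω | A 0 ω = n}).toReal * x ^ n :=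
    fun x => tsum_congr fun n => by rw [ha]
  have ha1 : ∑' n, a n = 1 :=
    calc ∑' n, a n = ∑' n, a n * 1 ^ n := by simp
      _ = ∫ ω, (1 : ℝ) ^ A 0 ω ∂μ := by rw [hA, tsum_measure_toReal_mul_pow (hmeas 0) (by simp)]
      _ = 1 := by simp
  have hT1 : ∑' n, tc n * z ^ n < 1 :=
    tsum_mul_pow_lt_one_of_eq_mul_tsum htcpos (by simpa using htcsum 1 (by simp)) ha1 hfix
      ⟨hz.1.le, hz.2⟩
  have hidle := queue_tsum_idle_eq hmeas hX0 hXrec hindep hid hz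
    ⟨tsum_nonneg fun n => mul_nonneg (htcpos n) (pow_nonneg hz.1.le n), hT1⟩
    (by rw [← hA]; exact hfix z ⟨hz.1.le, hz.2.le⟩)
  have hgf := queue_gf_mul_sub_eq hmeas hX0 hXrec hindep hid
    (abs_le.2 ⟨by linarith [hu.1], hu.2.le⟩) (abs_lt.2 ⟨by linarith [hz.1], hz.2⟩)
  rw [← hA, hidle, ← hΦ] at hgf
  have hu0 : u ≠ 0 := hu.1.ne'
  have hT : 1 - ∑' n, tc n * z ^ n ≠ 0 := by linarith
  rw [eq_div_iff (sub_ne_zero.2 (Ne.symm hden))]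
  field_simp at hgf ⊢
  linear_combination hgf

/-- for the single-server queue with i.i.d. arrivals of generating function
`A`, the full bivariate generating function equals
`Φ(u,z) = (1 + z·A(u)·(1 - 1/u)/(1 - T_A(z))) / (1 - z·A(u)/u)`
for `u ≠ 0` in the domain of convergence (where the denominator does not vanish),
with `T_A(z) = z·A(T_A(z))`, `T_A(0) = 0`. -/
theorem single_queue_bivariate_gf {Ω : Type*} [MeasurableSpace Ω] (μ : Measure Ω)
    [IsProbabilityMeasure μ]
    (A : ℕ → Ω → ℕ) (hmeas : ∀ t, Measurable (A t))
    (hindep : iIndepFun A μ)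
    (hid : ∀ t, μ.map (A t) = μ.map (A 0))
    (X : ℕ → Ω → ℕ)
    (hX0 : ∀ ω, X 0 ω = 0)
    (hXrec : ∀ t ω, X (t + 1) ω = (X t ω - 1) + A (t + 1) ω)
    (a : ℕ → ℝ) (ha : ∀ n, a n = (μ {ω | A 0 ω = n}).toReal)
    (tc : ℕ → ℝ) (htc0 : tc 0 = 0) (htcpos : ∀ n, 0 ≤ tc n)
    (htcsum : ∀ z ∈ Set.Icc (0 : ℝ) 1, Summable fun n => tc n * z ^ n)
    (hfix : ∀ z ∈ Set.Icc (0 : ℝ) 1,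
      (∑' n, tc n * z ^ n) = z * ∑' n, a n * (∑' k, tc k * z ^ k) ^ n)
    (Φ : ℝ → ℝ → ℝ)
    (hΦ : ∀ u z, Φ u z
      = ∑' t : ℕ, (∑' n : ℕ, (μ {ω | X t ω = n}).toReal * u ^ n) * z ^ t) :
    ∀ u ∈ Set.Ioo (0 : ℝ) 1, ∀ z ∈ Set.Ioo (0 : ℝ) 1,
      z * (∑' n, a n * u ^ n) / u ≠ 1 →
      Φ u z = (1 + z * (∑' n, a n * u ^ n) * (1 - 1 / u) / (1 - ∑' n, tc n * z ^ n))
                / (1 - z * (∑' n, a n * u ^ n) / u) :=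
  single_queue_bivariate_gf_general μ A hmeas hindep hid X hX0 hXrec a ha tc htcpos htcsum hfix Φ hΦ
end

section
/- Pollaczek-Khinchine formula: for the stable single-server queue X_{t+1} = (X_t - 1)_+ + A_{t+1} with i.i.d. arrivals of generating function A and mean λ = A'(1) < 1, the stationary distribution π has generating function Π(u) = (1 - λ)·A(u)·(u - 1)/(u - A(u)). -/
open Filter Topology

private lemma one_sub_pow_le_nat' (u : ℝ) (hu0 : 0 ≤ u) (hu1 : u ≤ 1) (n : ℕ) :
    1 - u ^ n ≤ n * (1 - u) := by
  induction n with
  | zero => simp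
  | succ n ih =>
    have hp : u ^ n ≤ 1 := pow_le_one₀ hu0 hu1
    have hp' : 0 ≤ u ^ n := pow_nonneg hu0 n
    push_cast
    rw [pow_succ]
    nlinarith

private lemma nat_pow_le_one_sub' (u : ℝ) (hu0 : 0 ≤ u) (hu1 : u ≤ 1) (n : ℕ) :
    (n : ℝ) * u ^ n * (1 - u) ≤ 1 - u ^ n := by
  induction n with
  | zero => simp
  | succ n ih =>
    have hp : u ^ (n + 1) ≤ 1 := pow_le_one₀ hu0 hu1
    have hp' : 0 ≤ u ^ n := pow_nonneg hu0 n
    have hp2 : u ^ n * u ≤ 1 := by rw [← pow_succ]; exact hp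
    push_cast
    rw [pow_succ]
    nlinarith [mul_le_mul_of_nonneg_left ih hu0,
      mul_nonneg (sub_nonneg.2 hu1) (sub_nonneg.2 hp2)]

private lemma shift_lemma (a : ℕ → ℝ) (u : ℝ) (k : ℕ)
    (hs : Summable fun n => a n * u ^ n) :
    Summable (fun n => (if k ≤ n then a (n - k) else 0) * u ^ n) ∧
    ∑' n, (if k ≤ n then a (n - k) else 0) * u ^ n = u ^ k * ∑' n, a n * u ^ n := by
  set f : ℕ → ℝ := fun n => (if k ≤ n then a (n - k) else 0) * u ^ n with hfdef
  have hfk : (fun i => f (i + k)) = fun i => (a i * u ^ i) * u ^ k := by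
    funext i
    simp [hfdef, Nat.le_add_left, Nat.add_sub_cancel, pow_add]
    ring
  have hsk : Summable fun i => f (i + k) := by
    rw [hfk]; exact hs.mul_right _
  have hsf : Summable f := (summable_nat_add_iff k).1 hsk
  refine ⟨hsf, ?_⟩
  have h1 := Summable.sum_add_tsum_nat_add k hsf
  have hz : ∑ i ∈ Finset.range k, f i = 0 := by
    apply Finset.sum_eq_zero
    intro i hi
    have hik : i < k := Finset.mem_range.1 hi
    have : ¬ k ≤ i := Nat.not_le.2 hik
    simp [hfdef, this]
  rw [hz, zero_add, hfk] at h1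
  rw [← h1, tsum_mul_right]
  ring

private lemma func_eq (a π : ℕ → ℝ) (ha : ∀ n, 0 ≤ a n) (hπ : ∀ n, 0 ≤ π n)
    (hasum : Summable a) (hπsum : Summable π) (ha1 : ∑' n, a n = 1)
    (hstat : ∀ n : ℕ,
      π n = ∑' m : ℕ, π m * (if m - 1 ≤ n then a (n - (m - 1)) else 0))
    (u : ℝ) (hu0 : 0 < u) (hu1 : u < 1) :
    (∑' n, π n * u ^ n) * (u - ∑' n, a n * u ^ n)
      = π 0 * (∑' n, a n * u ^ n) * (u - 1) := by
  have hu0' : (0:ℝ) ≤ u := hu0.le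
  have hu1' : u ≤ 1 := hu1.le
  have hupow : ∀ n : ℕ, u ^ n ≤ 1 := fun n => pow_le_one₀ hu0' hu1'
  have hupow0 : ∀ n : ℕ, 0 ≤ u ^ n := fun n => pow_nonneg hu0' n
  have hAs : Summable fun n => a n * u ^ n :=
    hasum.of_nonneg_of_le (fun n => mul_nonneg (ha n) (hupow0 n))
      (fun n => mul_le_of_le_one_right (ha n) (hupow n))
  have hPs : Summable fun n => π n * u ^ n :=
    hπsum.of_nonneg_of_le (fun n => mul_nonneg (hπ n) (hupow0 n))
      (fun n => mul_le_of_le_one_right (hπ n) (hupow n))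
  set A : ℝ := ∑' n, a n * u ^ n with hAdef
  have hA0 : 0 ≤ A := tsum_nonneg fun n => mul_nonneg (ha n) (hupow0 n)
  have hale1 : ∀ j, a j ≤ 1 := fun j => ha1 ▸ Summable.le_tsum hasum j (fun i _ => ha i)
  -- the double-indexed family
  set F : ℕ → ℕ → ℝ :=
    fun m n => π m * ((if m - 1 ≤ n then a (n - (m - 1)) else 0) * u ^ n) with hFdef
  have hF0 : ∀ m n, 0 ≤ F m n := by
    intro m n
    apply mul_nonneg (hπ m)
    apply mul_nonneg _ (hupow0 n)
    split <;> simp [ha]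
  have hFrow : ∀ m, Summable (F m) := by
    intro m
    exact ((shift_lemma a u (m - 1) hAs).1).mul_left (π m)
  have hFrowsum : ∀ m, ∑' n, F m n = π m * (u ^ (m - 1) * A) := by
    intro m
    rw [hFdef]
    rw [tsum_mul_left, (shift_lemma a u (m - 1) hAs).2]
  have hScol : Summable fun m => π m * (u ^ (m - 1) * A) := by
    apply hπsum.mul_right A |>.of_nonneg_of_le
    · intro m; exact mul_nonneg (hπ m) (mul_nonneg (hupow0 _) hA0)
    · intro m
      have : u ^ (m - 1) * A ≤ 1 * A := by
        apply mul_le_mul_of_nonneg_right (hupow _) hA0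
      rw [one_mul] at this
      exact mul_le_mul_of_nonneg_left this (hπ m)
  have hFsum : Summable (Function.uncurry F) := by
    have : Summable fun p : ℕ × ℕ => F p.1 p.2 := by
      rw [summable_prod_of_nonneg (fun p => hF0 p.1 p.2)]
      refine ⟨fun m => hFrow m, ?_⟩
      simpa only [hFrowsum] using hScol
    exact this
  have hFcol : ∀ n, Summable fun m => F m n := by
    intro n
    apply (hπsum.mul_right (u ^ n)).of_nonneg_of_le (fun m => hF0 m n)
    intro m
    rw [hFdef]
    have h1 : (if m - 1 ≤ n then a (n - (m - 1)) else 0) * u ^ n ≤ 1 * u ^ n := by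
      apply mul_le_mul_of_nonneg_right _ (hupow0 n)
      split
      · exact hale1 _
      · norm_num
    rw [one_mul] at h1
    exact mul_le_mul_of_nonneg_left h1 (hπ m)
  set P : ℝ := ∑' n, π n * u ^ n with hPdef
  have hP : P = ∑' m, π m * (u ^ (m - 1) * A) := by
    have step1 : P = ∑' n, ∑' m, F m n := by
      rw [hPdef]
      congr 1
      funext n
      rw [hstat n, ← tsum_mul_right]
      congr 1
      funext m
      rw [hFdef]
      ring
    rw [step1, Summable.tsum_comm' hFsum hFrow hFcol]
    congr 1
    funext m
    exact hFrowsum m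
  set S : ℝ := ∑' m, π m * u ^ (m - 1) with hSdef
  have hSs : Summable fun m => π m * u ^ (m - 1) :=
    hπsum.of_nonneg_of_le (fun m => mul_nonneg (hπ m) (hupow0 _))
      (fun m => mul_le_of_le_one_right (hπ m) (hupow _))
  have hPA : P = A * S := by
    rw [hP, hSdef, ← tsum_mul_left]
    exact tsum_congr fun m => by ring
  have hS : S = π 0 + ∑' m, π (m + 1) * u ^ m := by
    rw [hSdef, Summable.tsum_eq_zero_add hSs]
    simp
  have hPz : P = π 0 + (∑' m, π (m + 1) * u ^ m) * u := by
    rw [hPdef, Summable.tsum_eq_zero_add hPs]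
    simp only [pow_zero, mul_one]
    congr 1
    rw [← tsum_mul_right]
    congr 1
    funext m
    rw [pow_succ]
    ring
  -- conclude
  have hT : (∑' m, π (m + 1) * u ^ m) = S - π 0 := by rw [hS]; ring
  rw [hT] at hPz
  -- hPz : P = π 0 + (S - π 0) * u ;  hPA : P = A * S
  -- goal : P * (u - A) = π 0 * A * (u - 1)
  have hune : u ≠ 0 := ne_of_gt hu0
  have hSval : S = (P - π 0 + π 0 * u) / u := by
    field_simp
    linarith [hPz]
  rw [hSval] at hPA
  field_simp at hPA
  nlinarith [hPA]

/-- Pollaczek-Khinchine formula: for the stable single-server queue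
`X_{t+1} = (X_t - 1)₊ + A_{t+1}` with i.i.d. arrivals of generating function
`A(u) = ∑ₙ a n uⁿ` and mean `λ = A'(1) < 1`, any stationary distribution `π` of the chain
(`π n = ∑ₘ π m · P((m-1)₊ + A = n)`) has generating function
`Π(u) = (1-λ)·A(u)·(u-1)/(u - A(u))`. -/
theorem pollaczek_khinchine (a : ℕ → ℝ)
    (ha : ∀ n, 0 ≤ a n) (ha1 : ∑' n, a n = 1)
    (lam : ℝ) (hlsum : Summable fun n : ℕ => (n : ℝ) * a n)
    (hlam : lam = ∑' n : ℕ, (n : ℝ) * a n) (hlam1 : lam < 1)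
    (π : ℕ → ℝ) (hπ : ∀ n, 0 ≤ π n) (hπ1 : ∑' n, π n = 1)
    (hstat : ∀ n : ℕ,
      π n = ∑' m : ℕ, π m * (if m - 1 ≤ n then a (n - (m - 1)) else 0)) :
    ∀ u ∈ Set.Ioo (0 : ℝ) 1,
      (∑' n, π n * u ^ n)
        = (1 - lam) * (∑' n, a n * u ^ n) * (u - 1) / (u - ∑' n, a n * u ^ n) := by
  have hasum : Summable a := by
    by_contra h
    rw [tsum_eq_zero_of_not_summable h] at ha1
    exact one_ne_zero ha1.symm
  have hπsum : Summable π := by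
    by_contra h
    rw [tsum_eq_zero_of_not_summable h] at hπ1
    exact one_ne_zero hπ1.symm
  -- summability of power series
  have hAs : ∀ u : ℝ, 0 ≤ u → u ≤ 1 → Summable fun n => a n * u ^ n := by
    intro u h0 h1
    exact hasum.of_nonneg_of_le (fun n => mul_nonneg (ha n) (pow_nonneg h0 n))
      (fun n => mul_le_of_le_one_right (ha n) (pow_le_one₀ h0 h1))
  have hBs : ∀ u : ℝ, 0 ≤ u → u ≤ 1 → Summable fun n : ℕ => (n : ℝ) * a n * u ^ n := by
    intro u h0 h1
    exact hlsum.of_nonneg_of_le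
      (fun n => mul_nonneg (mul_nonneg (Nat.cast_nonneg n) (ha n)) (pow_nonneg h0 n))
      (fun n => mul_le_of_le_one_right (mul_nonneg (Nat.cast_nonneg n) (ha n)) (pow_le_one₀ h0 h1))
  -- key estimates : (1-lam)(1-u) ≤ A(u) - u ≤ (1-u)(1 - B(u))
  have hkey : ∀ u : ℝ, 0 ≤ u → u ≤ 1 →
      (1 - lam) * (1 - u) ≤ (∑' n, a n * u ^ n) - u ∧
      (∑' n, a n * u ^ n) - u ≤ (1 - u) * (1 - ∑' n : ℕ, (n : ℝ) * a n * u ^ n) := by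
    intro u h0 h1
    have hsub : Summable fun n => a n - a n * u ^ n := hasum.sub (hAs u h0 h1)
    have h1A : 1 - (∑' n, a n * u ^ n) = ∑' n, (a n - a n * u ^ n) := by
      rw [Summable.tsum_sub hasum (hAs u h0 h1), ha1]
    have hup : ∑' n, (a n - a n * u ^ n) ≤ lam * (1 - u) := by
      rw [hlam, ← tsum_mul_right]
      apply Summable.tsum_le_tsum _ hsub (hlsum.mul_right _)
      intro n
      have := one_sub_pow_le_nat' u h0 h1 n
      have han := ha n
      nlinarith
    have hlo : (1 - u) * (∑' n : ℕ, (n : ℝ) * a n * u ^ n) ≤ ∑' n, (a n - a n * u ^ n) := by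
      rw [← tsum_mul_left]
      apply Summable.tsum_le_tsum _ ((hBs u h0 h1).mul_left _) hsub
      intro n
      have := nat_pow_le_one_sub' u h0 h1 n
      have han := ha n
      nlinarith
    constructor
    · nlinarith [h1A, hup]
    · nlinarith [h1A, hlo]
  -- the sequence u_k → 1⁻
  set v : ℕ → ℝ := fun k => 1 - 1 / ((k : ℝ) + 2) with hvdef
  have hv0 : ∀ k, 0 < v k := by
    intro k
    have hk0 : (0:ℝ) ≤ (k : ℝ) := Nat.cast_nonneg k
    have : 1 / ((k : ℝ) + 2) ≤ 1 / 2 := by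
      apply one_div_le_one_div_of_le
      · norm_num
      · linarith
    simp only [hvdef]
    linarith
  have hv1 : ∀ k, v k < 1 := by
    intro k
    have : 0 < 1 / ((k : ℝ) + 2) := by positivity
    simp only [hvdef]
    linarith
  have hvlim : Tendsto v atTop (𝓝 1) := by
    have h1 : Tendsto (fun k : ℕ => (k : ℝ) + 2) atTop atTop :=
      tendsto_atTop_add_const_right _ 2 tendsto_natCast_atTop_atTop
    have h2 : Tendsto (fun k : ℕ => ((k : ℝ) + 2)⁻¹) atTop (𝓝 0) :=
      h1.inv_tendsto_atTop
    have h3 : Tendsto (fun k : ℕ => 1 - ((k : ℝ) + 2)⁻¹) atTop (𝓝 (1 - 0)) :=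
      tendsto_const_nhds.sub h2
    rw [hvdef]
    simpa [one_div] using h3
  -- limits of the three power series along v
  have hdct : ∀ (c : ℕ → ℝ), (∀ n, 0 ≤ c n) → Summable c →
      Tendsto (fun k => ∑' n, c n * (v k) ^ n) atTop (𝓝 (∑' n, c n)) := by
    intro c hc hcs
    apply tendsto_tsum_of_dominated_convergence hcs
    · intro n
      have : Tendsto (fun k => (v k) ^ n) atTop (𝓝 (1 ^ n)) := hvlim.pow n
      rw [one_pow] at this
      simpa using (tendsto_const_nhds (x := c n)).mul this
    · filter_upwards with k n
      rw [Real.norm_eq_abs, abs_mul, abs_of_nonneg (hc n),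
          abs_of_nonneg (pow_nonneg (hv0 k).le n)]
      exact mul_le_of_le_one_right (hc n) (pow_le_one₀ (hv0 k).le (hv1 k).le)
  have hPlim : Tendsto (fun k => ∑' n, π n * (v k) ^ n) atTop (𝓝 1) := by
    have := hdct π hπ hπsum
    rwa [hπ1] at this
  have hBlim : Tendsto (fun k => ∑' n : ℕ, (n : ℝ) * a n * (v k) ^ n) atTop (𝓝 lam) := by
    have := hdct (fun n : ℕ => (n : ℝ) * a n)
      (fun n => mul_nonneg (Nat.cast_nonneg n) (ha n)) hlsum
    rwa [← hlam] at this
  have hAlim : Tendsto (fun k => ∑' n, a n * (v k) ^ n) atTop (𝓝 1) := by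
    have := hdct a ha hasum
    rwa [ha1] at this
  -- squeeze : Q k := (A(v k) - v k)/(1 - v k) → 1 - lam
  have hQlim : Tendsto
      (fun k => ((∑' n, a n * (v k) ^ n) - v k) / (1 - v k)) atTop (𝓝 (1 - lam)) := by
    apply tendsto_of_tendsto_of_tendsto_of_le_of_le (g := fun _ => 1 - lam)
      (h := fun k => 1 - ∑' n : ℕ, (n : ℝ) * a n * (v k) ^ n)
    · exact tendsto_const_nhds
    · have := (tendsto_const_nhds (x := (1:ℝ)) (f := atTop)).sub hBlim
      simpa using this
    · intro k
      dsimp only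
      have hd : 0 < 1 - v k := by linarith [hv1 k]
      rw [le_div_iff₀ hd]
      have := (hkey (v k) (hv0 k).le (hv1 k).le).1
      linarith
    · intro k
      dsimp only
      have hd : 0 < 1 - v k := by linarith [hv1 k]
      rw [div_le_iff₀ hd]
      have := (hkey (v k) (hv0 k).le (hv1 k).le).2
      linarith
  -- identify π 0 = 1 - lam
  have hπ0 : π 0 = 1 - lam := by
    have hconst : ∀ k, (∑' n, π n * (v k) ^ n) *
        (((∑' n, a n * (v k) ^ n) - v k) / (1 - v k))
        = π 0 * (∑' n, a n * (v k) ^ n) := by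
      intro k
      have hd : (1 : ℝ) - v k ≠ 0 := by linarith [hv1 k]
      have E := func_eq a π ha hπ hasum hπsum ha1 hstat (v k) (hv0 k) (hv1 k)
      field_simp
      nlinarith [E]
    have h1 : Tendsto (fun k => (∑' n, π n * (v k) ^ n) *
        (((∑' n, a n * (v k) ^ n) - v k) / (1 - v k))) atTop (𝓝 (1 * (1 - lam))) :=
      hPlim.mul hQlim
    have h2 : Tendsto (fun k => π 0 * (∑' n, a n * (v k) ^ n)) atTop (𝓝 (π 0 * 1)) :=
      (tendsto_const_nhds).mul hAlim
    rw [one_mul] at h1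
    rw [mul_one] at h2
    have := tendsto_nhds_unique ((tendsto_congr hconst).1 h1) h2
    linarith
  -- conclusion
  intro u hu
  obtain ⟨hu0, hu1⟩ := hu
  have E := func_eq a π ha hπ hasum hπsum ha1 hstat u hu0 hu1
  have hden : u - (∑' n, a n * u ^ n) ≠ 0 := by
    have := (hkey u hu0.le hu1.le).1
    have h1 : (0:ℝ) < (1 - lam) * (1 - u) := by
      apply mul_pos <;> linarith
    intro hcontra
    rw [sub_eq_zero] at hcontra
    rw [← hcontra] at this
    linarith
  rw [eq_div_iff hden]
  rw [hπ0] at E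
  linarith [E]
end

section
/- For the single-server queue with Bernoulli(p) service (serve one packet with probability p if nonempty) and i.i.d. arrivals with generating function A and mean λ < p, the stationary queue-length distribution has generating function Π(u) = (1 - λ/p) · A(u)·(1 - S(1/u)) / (1 - A(u)·S(1/u)), where S(u) = 1 - p + p·u. -/
/-!
Multiplying the stationarity equation by `vⁿ` and summing over `n` (the terms are nonnegative, so
the double sum may be swapped) gives, for `0 ≤ v ≤ 1`,
`Π(v) (v - A(v) ((1 - p) v + p)) = p π₀ A(v) (v - 1)`,
which determines `Π` once `π₀` is known. Since `1 - A(v) = (1 - v) G(v)` with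
`G(v) = ∑ aₙ (1 + v + ⋯ + vⁿ⁻¹)`, dividing by `v - 1` leaves `Π(v) (p A(v) - v G(v)) = p π₀ A(v)`.
As `v → 1⁻`, Abel's theorem gives `Π(v), A(v) → 1` and dominated convergence gives `G(v) → λ`,
so `p π₀ = p - λ`.
-/

open Filter Topology Finset

/-- Transition probability from `m` to `n` packets; the natural subtraction `m - 1` is the
`(m - 1)₊` of the dynamics, so an empty queue stays empty when served. -/
def bernoulliServiceKernel (p : ℝ) (a : ℕ → ℝ) (m n : ℕ) : ℝ :=
  (1 - p) * (if m ≤ n then a (n - m) else 0) + p * (if m - 1 ≤ n then a (n - (m - 1)) else 0)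

def IsStationaryDist (K : ℕ → ℕ → ℝ) (π : ℕ → ℝ) : Prop :=
  ∀ n, π n = ∑' m, π m * K m n

theorem hasSum_of_tsum_eq_one {ι : Type*} {f : ι → ℝ} (h : ∑' i, f i = 1) : HasSum f 1 := by
  have hf : Summable f := by
    by_contra hf
    simp [tsum_eq_zero_of_not_summable hf] at h
  exact h ▸ hf.hasSum

theorem Summable.mul_pow_of_nonneg {f : ℕ → ℝ} (hf : Summable f) (hf0 : ∀ n, 0 ≤ f n) {v : ℝ}
    (hv0 : 0 ≤ v) (hv1 : v ≤ 1) (e : ℕ → ℕ) : Summable fun n => f n * v ^ e n :=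
  hf.of_nonneg_of_le (fun n => mul_nonneg (hf0 n) (pow_nonneg hv0 _))
    fun n => mul_le_of_le_one_right (hf0 n) (pow_le_one₀ hv0 hv1)

theorem hasSum_ite_le_mul_pow {R : Type*} [CommSemiring R] [TopologicalSpace R]
    [IsTopologicalSemiring R] {a : ℕ → R} {v s : R} (h : HasSum (fun n => a n * v ^ n) s)
    (m : ℕ) : HasSum (fun n => (if m ≤ n then a (n - m) else 0) * v ^ n) (v ^ m * s) := by
  have hinj : Function.Injective (· + m) := add_left_injective m
  have hcomp : (fun n => (if m ≤ n then a (n - m) else 0) * v ^ n) ∘ (· + m)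
      = fun k => v ^ m * (a k * v ^ k) := by
    funext k
    simp only [Function.comp_apply, le_add_iff_nonneg_left, zero_le, if_true, Nat.add_sub_cancel,
      pow_add]
    ring
  rw [← hinj.hasSum_iff, hcomp]
  · exact h.mul_left (v ^ m)
  · intro n hn
    rw [if_neg, zero_mul]
    exact fun hmn => hn ⟨n - m, Nat.sub_add_cancel hmn⟩

theorem tsum_mul_pow_pred_mul {R : Type*} [CommRing R] [TopologicalSpace R]
    [IsTopologicalRing R] [T2Space R] {f : ℕ → R} {v : R} (h : Summable fun m => f m * v ^ m)
    (h' : Summable fun m => f m * v ^ (m - 1)) :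
    (∑' m, f m * v ^ (m - 1)) * v = ∑' m, f m * v ^ m + f 0 * (v - 1) := by
  have hshift : ∑' m, f (m + 1) * v ^ (m + 1) = (∑' m, f (m + 1) * v ^ m) * v := by
    have hs : Summable fun m => f (m + 1) * v ^ m := by simpa using (summable_nat_add_iff 1).2 h'
    rw [← hs.tsum_mul_right]
    exact tsum_congr fun m => by rw [pow_succ, mul_assoc]
  rw [h.tsum_eq_zero_add, h'.tsum_eq_zero_add, hshift]
  simp only [Nat.zero_sub, Nat.add_sub_cancel, pow_zero]
  ring

theorem tsum_tsum_comm_of_nonneg {α β : Type*} {F : α → β → ℝ} (hF : ∀ m n, 0 ≤ F m n)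
    {g : α → ℝ} (hg : ∀ m, HasSum (F m) (g m)) (hs : Summable g) :
    ∑' n, ∑' m, F m n = ∑' m, g m := by
  have hF' : Summable (Function.uncurry F) :=
    (summable_prod_of_nonneg fun q => hF q.1 q.2).2
      ⟨fun m => (hg m).summable, by simpa only [(hg _).tsum_eq] using hs⟩
  rw [hF'.tsum_comm]
  exact tsum_congr fun m => (hg m).tsum_eq

theorem tsum_sub_tsum_mul_pow {a : ℕ → ℝ} (hsa : Summable a) {v : ℝ}
    (hav : Summable fun n => a n * v ^ n) :
    (∑' n, a n) - ∑' n, a n * v ^ n = (1 - v) * ∑' n, a n * ∑ i ∈ range n, v ^ i := by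
  rw [← hsa.tsum_sub hav, ← tsum_mul_left]
  exact tsum_congr fun n => by linear_combination a n * geom_sum_mul v n

theorem tendsto_tsum_mul_geom_sum_nhdsLT {a : ℕ → ℝ} (ha : ∀ n, 0 ≤ a n)
    (hsum : Summable fun n : ℕ => (n : ℝ) * a n) :
    Tendsto (fun v => ∑' n, a n * ∑ i ∈ range n, v ^ i) (𝓝[<] 1)
      (𝓝 (∑' n : ℕ, (n : ℝ) * a n)) := by
  refine tendsto_tsum_of_dominated_convergence hsum (fun n => ?_) ?_
  · refine tendsto_nhdsWithin_of_tendsto_nhds ?_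
    exact (continuous_const.mul (continuous_finsetSum _ fun i _ => continuous_pow i)).tendsto' 1
      _ (by simp [mul_comm])
  · filter_upwards [Ioo_mem_nhdsLT zero_lt_one] with v ⟨hv0, hv1⟩ n
    have hgeom : ∑ i ∈ range n, v ^ i ≤ n := by
      simpa using Finset.sum_le_sum fun i (_ : i ∈ range n) => pow_le_one₀ hv0.le hv1.le
    rw [Real.norm_eq_abs, abs_of_nonneg (mul_nonneg (ha n) (sum_nonneg fun i _ => by positivity)),
      mul_comm (n : ℝ)]
    exact mul_le_mul_of_nonneg_left hgeom (ha n)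

theorem bernoulliServiceKernel_nonneg {p : ℝ} (hp0 : 0 ≤ p) (hp1 : p ≤ 1) {a : ℕ → ℝ}
    (ha : ∀ n, 0 ≤ a n) (m n : ℕ) : 0 ≤ bernoulliServiceKernel p a m n := by
  have hite : ∀ k, (0 : ℝ) ≤ if k ≤ n then a (n - k) else 0 := fun k => by
    split_ifs
    exacts [ha _, le_rfl]
  exact add_nonneg (mul_nonneg (sub_nonneg.2 hp1) (hite m)) (mul_nonneg hp0 (hite (m - 1)))

theorem hasSum_bernoulliServiceKernel_mul_pow {p v s : ℝ} {a : ℕ → ℝ}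
    (h : HasSum (fun n => a n * v ^ n) s) (m : ℕ) :
    HasSum (fun n => bernoulliServiceKernel p a m n * v ^ n)
      ((1 - p) * (v ^ m * s) + p * (v ^ (m - 1) * s)) := by
  have hK : (fun n => bernoulliServiceKernel p a m n * v ^ n) = fun n =>
      (1 - p) * ((if m ≤ n then a (n - m) else 0) * v ^ n)
        + p * ((if m - 1 ≤ n then a (n - (m - 1)) else 0) * v ^ n) :=
    funext fun n => by unfold bernoulliServiceKernel; ring
  rw [hK]
  exact ((hasSum_ite_le_mul_pow h m).mul_left _).add ((hasSum_ite_le_mul_pow h (m - 1)).mul_left _)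

theorem IsStationaryDist.bernoulliService_tsum_mul_pow {p : ℝ} (hp0 : 0 ≤ p) (hp1 : p ≤ 1)
    {a π : ℕ → ℝ} (ha : ∀ n, 0 ≤ a n) (hsa : Summable a) (hπ : ∀ n, 0 ≤ π n) (hsπ : Summable π)
    (hstat : IsStationaryDist (bernoulliServiceKernel p a) π) {v : ℝ} (hv0 : 0 ≤ v) (hv1 : v ≤ 1) :
    (∑' n, π n * v ^ n) * (v - (∑' n, a n * v ^ n) * ((1 - p) * v + p))
      = p * π 0 * (∑' n, a n * v ^ n) * (v - 1) := by
  set A := ∑' n, a n * v ^ n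
  have hA : HasSum (fun n => a n * v ^ n) A :=
    (hsa.mul_pow_of_nonneg ha hv0 hv1 fun n => n).hasSum
  have hπv := hsπ.mul_pow_of_nonneg hπ hv0 hv1 fun n => n
  have hπv' := hsπ.mul_pow_of_nonneg hπ hv0 hv1 fun n => n - 1
  have hfiber : ∀ m, HasSum (fun n => π m * (bernoulliServiceKernel p a m n * v ^ n))
      (π m * ((1 - p) * (v ^ m * A) + p * (v ^ (m - 1) * A))) := fun m =>
    (hasSum_bernoulliServiceKernel_mul_pow hA m).mul_left (π m)
  have hsplit : ∀ m, π m * ((1 - p) * (v ^ m * A) + p * (v ^ (m - 1) * A))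
      = (1 - p) * A * (π m * v ^ m) + p * A * (π m * v ^ (m - 1)) := fun m => by ring
  have hPi : ∑' n, π n * v ^ n
      = (1 - p) * A * ∑' m, π m * v ^ m + p * A * ∑' m, π m * v ^ (m - 1) := by
    calc ∑' n, π n * v ^ n = ∑' n, ∑' m, π m * (bernoulliServiceKernel p a m n * v ^ n) :=
          tsum_congr fun n => by
            rw [hstat n, ← tsum_mul_right]
            exact tsum_congr fun m => mul_assoc _ _ _
      _ = ∑' m, π m * ((1 - p) * (v ^ m * A) + p * (v ^ (m - 1) * A)) :=
          tsum_tsum_comm_of_nonneg (fun m n => mul_nonneg (hπ m) (mul_nonneg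
            (bernoulliServiceKernel_nonneg hp0 hp1 ha m n) (pow_nonneg hv0 n))) hfiber
            (((hπv.mul_left _).add (hπv'.mul_left _)).congr fun m => (hsplit m).symm)
      _ = _ := by
          rw [tsum_congr hsplit, (hπv.mul_left _).tsum_add (hπv'.mul_left _), tsum_mul_left,
            tsum_mul_left]
  linear_combination v * hPi + p * A * tsum_mul_pow_pred_mul hπv hπv'

theorem IsStationaryDist.bernoulliService_mul_apply_zero {p : ℝ} (hp0 : 0 ≤ p) (hp1 : p ≤ 1)
    {a π : ℕ → ℝ} (ha : ∀ n, 0 ≤ a n) (ha1 : HasSum a 1)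
    (hmean : Summable fun n : ℕ => (n : ℝ) * a n) (hπ : ∀ n, 0 ≤ π n) (hπ1 : HasSum π 1)
    (hstat : IsStationaryDist (bernoulliServiceKernel p a) π) :
    p * π 0 = p - ∑' n : ℕ, (n : ℝ) * a n := by
  have hreduced : ∀ᶠ v in 𝓝[<] (1 : ℝ), (∑' n, π n * v ^ n) * (p * (∑' n, a n * v ^ n)
      - v * ∑' n, a n * ∑ i ∈ range n, v ^ i) = p * π 0 * (∑' n, a n * v ^ n) := by
    filter_upwards [Ioo_mem_nhdsLT zero_lt_one] with v ⟨hv0, hv1⟩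
    have hgen := hstat.bernoulliService_tsum_mul_pow hp0 hp1 ha ha1.summable hπ hπ1.summable
      hv0.le hv1.le
    have hgeom := tsum_sub_tsum_mul_pow ha1.summable
      (ha1.summable.mul_pow_of_nonneg ha hv0.le hv1.le fun n => n)
    rw [ha1.tsum_eq] at hgeom
    refine mul_right_cancel₀ (sub_ne_zero.2 hv1.ne) ?_
    linear_combination hgen - (∑' n, π n * v ^ n) * v * hgeom
  have hPi := Real.tendsto_tsum_powerSeries_nhdsWithin_lt hπ1.tendsto_sum_nat
  have hA := Real.tendsto_tsum_powerSeries_nhdsWithin_lt ha1.tendsto_sum_nat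
  have hv : Tendsto (fun v : ℝ => v) (𝓝[<] 1) (𝓝 1) :=
    tendsto_nhdsWithin_of_tendsto_nhds tendsto_id
  have hlhs := hPi.mul ((hA.const_mul p).sub (hv.mul (tendsto_tsum_mul_geom_sum_nhdsLT ha hmean)))
  have hrhs := hA.const_mul (p * π 0)
  linear_combination (tendsto_nhds_unique (hlhs.congr' hreduced) hrhs).symm

theorem bernoulli_service_stationary_general (p : ℝ) (hp0 : 0 < p) (hp1 : p ≤ 1)
    (a : ℕ → ℝ) (ha : ∀ n, 0 ≤ a n) (ha1 : ∑' n, a n = 1)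
    (lam : ℝ) (hlsum : Summable fun n : ℕ => (n : ℝ) * a n)
    (hlam : lam = ∑' n : ℕ, (n : ℝ) * a n)
    (π : ℕ → ℝ) (hπ : ∀ n, 0 ≤ π n) (hπ1 : ∑' n, π n = 1)
    (hstat : ∀ n : ℕ,
      π n = ∑' m : ℕ, π m *
        ((1 - p) * (if m ≤ n then a (n - m) else 0)
          + p * (if m - 1 ≤ n then a (n - (m - 1)) else 0))) :
    ∀ u ∈ Set.Ioo (0 : ℝ) 1,
      (∑' n, a n * u ^ n) * (1 - p + p * (1 / u)) ≠ 1 →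
      (∑' n, π n * u ^ n)
        = (1 - lam / p) * (∑' n, a n * u ^ n) * (1 - (1 - p + p * (1 / u)))
            / (1 - (∑' n, a n * u ^ n) * (1 - p + p * (1 / u))) := by
  intro u ⟨hu0, hu1⟩ hden
  have hstat' : IsStationaryDist (bernoulliServiceKernel p a) π := hstat
  have ha1' := hasSum_of_tsum_eq_one ha1
  have hπ1' := hasSum_of_tsum_eq_one hπ1
  have hπ0 : 1 - lam / p = π 0 := by
    have h := hstat'.bernoulliService_mul_apply_zero hp0.le hp1 ha ha1' hlsum hπ hπ1'
    rw [← hlam] at h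
    field_simp
    linarith
  have hgen := hstat'.bernoulliService_tsum_mul_pow hp0.le hp1 ha ha1'.summable hπ hπ1'.summable
    hu0.le hu1.le
  rw [hπ0, eq_div_iff (sub_ne_zero.2 hden.symm)]
  field_simp
  linear_combination hgen

/-- for the single-server queue with Bernoulli(p) service
(`X_{t+1} = (X_t - S_t)₊ + A_{t+1}`, `S_t` i.i.d. Bernoulli(p)) and i.i.d. arrivals of
generating function `A` with mean `λ < p`, any stationary distribution `π` has generating
function `Π(u) = (1 - λ/p)·A(u)·(1 - S(1/u)) / (1 - A(u)·S(1/u))`, where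
`S(u) = 1 - p + p·u` (for `u ∈ (0,1)` in the domain where the denominator is nonzero). -/
theorem bernoulli_service_stationary (p : ℝ) (hp0 : 0 < p) (hp1 : p ≤ 1)
    (a : ℕ → ℝ) (ha : ∀ n, 0 ≤ a n) (ha1 : ∑' n, a n = 1)
    (lam : ℝ) (hlsum : Summable fun n : ℕ => (n : ℝ) * a n)
    (hlam : lam = ∑' n : ℕ, (n : ℝ) * a n) (hlamp : lam < p)
    (π : ℕ → ℝ) (hπ : ∀ n, 0 ≤ π n) (hπ1 : ∑' n, π n = 1)
    (hstat : ∀ n : ℕ,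
      π n = ∑' m : ℕ, π m *
        ((1 - p) * (if m ≤ n then a (n - m) else 0)
          + p * (if m - 1 ≤ n then a (n - (m - 1)) else 0))) :
    ∀ u ∈ Set.Ioo (0 : ℝ) 1,
      (∑' n, a n * u ^ n) * (1 - p + p * (1 / u)) ≠ 1 →
      (∑' n, π n * u ^ n)
        = (1 - lam / p) * (∑' n, a n * u ^ n) * (1 - (1 - p + p * (1 / u)))
            / (1 - (∑' n, a n * u ^ n) * (1 - p + p * (1 / u))) :=
  bernoulli_service_stationary_general p hp0 hp1 a ha ha1 lam hlsum hlam π hπ hπ1 hstat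
end

section
/- Priority queue functional equation: for the single-server queue with two independent i.i.d. arrival flows of generating functions A (priority) and B, with state (X_t, Y_t) evolving by X_{t+1} = (X_t - 1)_+ + A_{t+1}, Y_{t+1} = (Y_t - 1_{X_t = 0})_+ + B_{t+1}, the trivariate generating function Φ(u,v,z) = Σ P(X_t=n, Y_t=m) u^n v^m z^t satisfies Φ(u,v,z)·(1 - zA(u)B(v)/u) = 1 - zA(u)B(v)·[Φ(0,v,z)(1/u - 1/v) + Φ(0,0,z)(1/v - 1)]. -/
/-!
The state `Z t = (X t, Y t)` is a measurable function of the arrivals up to time `t`, hence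
independent of the next arrival `(A (t+1), B (t+1))`. So the joint generating function `G t` of
the state satisfies `G (t+1) (u, v) = A(u) B(v) E[u ^ (X t - 1) v ^ (Y t - 1_{X t = 0})]`, and
splitting according to whether `X t = 0` and `Y t = 0` the last expectation is
`G t (u, v) / u + G t (0, v) (1/v - 1/u) + G t (0, 0) (1 - 1/v)`. Multiplying by `z ^ (t+1)` and
summing over `t` gives the functional equation, since `Φ(u, v, z) = ∑ G t (u, v) zᵗ`.
-/

open MeasureTheory ProbabilityTheory Set

section NoiseDrivenRecursion

variable {Ω α β : Type*} {mΩ : MeasurableSpace Ω} [mα : MeasurableSpace α] [MeasurableSpace β]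
  {μ : Measure Ω} {ξ : ℕ → Ω → α} {F : β → α → β} {Z : ℕ → Ω → β} {z₀ : β}

theorem measurable_iSup_comap_of_recursion (hF : Measurable (Function.uncurry F))
    (h0 : Z 0 = fun _ => z₀) (hrec : ∀ t ω, Z (t + 1) ω = F (Z t ω) (ξ (t + 1) ω)) (t : ℕ) :
    Measurable[⨆ i ∈ Iic t, mα.comap (ξ i)] (Z t) := by
  induction t with
  | zero => rw [h0]; exact measurable_const
  | succ t ih =>
    have hpast : (⨆ i ∈ Iic t, mα.comap (ξ i)) ≤ ⨆ i ∈ Iic (t + 1), mα.comap (ξ i) :=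
      biSup_mono fun i hi => le_trans hi (Nat.le_succ t)
    have hnext : Measurable[⨆ i ∈ Iic (t + 1), mα.comap (ξ i)] (ξ (t + 1)) :=
      (comap_measurable (ξ (t + 1))).mono
        (le_biSup (fun i => mα.comap (ξ i)) (mem_Iic.2 le_rfl)) le_rfl
    exact funext (hrec t) ▸ hF.comp ((ih.mono hpast le_rfl).prodMk hnext)

theorem measurable_of_recursion (hξ : ∀ t, Measurable (ξ t))
    (hF : Measurable (Function.uncurry F)) (h0 : Z 0 = fun _ => z₀)
    (hrec : ∀ t ω, Z (t + 1) ω = F (Z t ω) (ξ (t + 1) ω)) (t : ℕ) : Measurable (Z t) :=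
  (measurable_iSup_comap_of_recursion hF h0 hrec t).mono
    (iSup₂_le fun i _ => (hξ i).comap_le) le_rfl

theorem indepFun_of_recursion (hξ : ∀ t, Measurable (ξ t)) (hind : iIndepFun ξ μ)
    (hF : Measurable (Function.uncurry F)) (h0 : Z 0 = fun _ => z₀)
    (hrec : ∀ t ω, Z (t + 1) ω = F (Z t ω) (ξ (t + 1) ω)) (t : ℕ) :
    IndepFun (Z t) (ξ (t + 1)) μ := by
  have hdisj : Disjoint (Iic t) {t + 1} := by simp
  rw [IndepFun_iff_Indep]
  refine indep_of_indep_of_le_right (indep_of_indep_of_le_left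
    (indep_iSup_of_disjoint (fun i => (hξ i).comap_le) hind.iIndep hdisj) ?_) ?_
  · exact (measurable_iSup_comap_of_recursion hF h0 hrec t).comap_le
  · exact le_biSup (fun i => mα.comap (ξ i)) (mem_singleton _)

end NoiseDrivenRecursion

section DiscreteExpectation

variable {Ω α : Type*} {mΩ : MeasurableSpace Ω} {μ : Measure Ω}
  [MeasurableSpace α] [Countable α] [MeasurableSingletonClass α]

theorem hasSum_measureReal_mul_of_integrable {Z : Ω → α} (hZ : Measurable Z) {g : α → ℝ}
    (hg : Integrable g (μ.map Z)) :
    HasSum (fun x => μ.real {ω | Z ω = x} * g x) (∫ ω, g (Z ω) ∂μ) := by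
  rw [← integral_map hZ.aemeasurable (measurable_of_countable g).aestronglyMeasurable]
  rw [← Measure.sum_smul_dirac (μ.map Z)] at hg ⊢
  have hdirac (x : α) :
      ∫ y, g y ∂((μ.map Z) {x} • Measure.dirac x) = μ.real {ω | Z ω = x} * g x := by
    rw [integral_smul_measure, integral_dirac, Measure.map_apply hZ (measurableSet_singleton x),
      smul_eq_mul, measureReal_def]
    rfl
  simpa only [hdirac] using hasSum_integral_measure hg

theorem integrable_of_countable_of_abs_le (ν : Measure α) [IsFiniteMeasure ν] {g : α → ℝ}
    {C : ℝ} (hg : ∀ x, |g x| ≤ C) : Integrable g ν :=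
  .of_bound (measurable_of_countable g).aestronglyMeasurable C (ae_of_all _ hg)

end DiscreteExpectation

theorem abs_pow_mul_pow_le_one {u v : ℝ} (hu : u ∈ Icc 0 1) (hv : v ∈ Icc 0 1) (n m : ℕ) :
    |u ^ n * v ^ m| ≤ 1 := by
  rw [abs_of_nonneg (mul_nonneg (pow_nonneg hu.1 n) (pow_nonneg hv.1 m))]
  exact mul_le_one₀ (pow_le_one₀ hu.1 hu.2) (pow_nonneg hv.1 m) (pow_le_one₀ hv.1 hv.2)

/-- One service completion: a priority customer leaves if there is one, otherwise a regular one
(if any). -/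
def serve (p : ℕ × ℕ) : ℕ × ℕ := (p.1 - 1, p.2 - if p.1 = 0 then 1 else 0)

theorem pow_mul_pow_serve {u v : ℝ} (hu : u ≠ 0) (hv : v ≠ 0) (p : ℕ × ℕ) :
    u ^ (serve p).1 * v ^ (serve p).2
      = u ^ p.1 * v ^ p.2 / u + 0 ^ p.1 * v ^ p.2 * (1 / v - 1 / u)
        + 0 ^ p.1 * 0 ^ p.2 * (1 - 1 / v) := by
  obtain ⟨_ | n, _ | m⟩ := p <;> simp [serve, pow_succ] <;> field_simp
  ring

noncomputable def jointPGF {Ω : Type*} {mΩ : MeasurableSpace Ω} (μ : Measure Ω)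
    (Z : Ω → ℕ × ℕ) (u v : ℝ) : ℝ :=
  ∫ ω, u ^ (Z ω).1 * v ^ (Z ω).2 ∂μ

section JointPGF

variable {Ω : Type*} {mΩ : MeasurableSpace Ω} {μ : Measure Ω} {u v : ℝ}

theorem integrable_pow_mul_pow [IsFiniteMeasure μ] {Z : Ω → ℕ × ℕ} (hZ : Measurable Z)
    (hu : u ∈ Icc 0 1) (hv : v ∈ Icc 0 1) :
    Integrable (fun ω => u ^ (Z ω).1 * v ^ (Z ω).2) μ :=
  (integrable_of_countable_of_abs_le (μ.map Z) fun p => abs_pow_mul_pow_le_one hu hv p.1 p.2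
    ).comp_measurable hZ

theorem hasSum_jointPGF [IsFiniteMeasure μ] {Z : Ω → ℕ × ℕ} (hZ : Measurable Z)
    (hu : u ∈ Icc 0 1) (hv : v ∈ Icc 0 1) :
    HasSum (fun n => ∑' m, μ.real {ω | (Z ω).1 = n ∧ (Z ω).2 = m} * u ^ n * v ^ m)
      (jointPGF μ Z u v) := by
  have h := hasSum_measureReal_mul_of_integrable hZ
    (integrable_of_countable_of_abs_le (μ.map Z) fun p => abs_pow_mul_pow_le_one hu hv p.1 p.2)
  refine h.prod_fiberwise fun n => ?_
  simpa only [Prod.ext_iff, mul_assoc] using (h.summable.prod_factor n).hasSum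

theorem abs_jointPGF_le_one [IsProbabilityMeasure μ] (Z : Ω → ℕ × ℕ) (hu : u ∈ Icc 0 1)
    (hv : v ∈ Icc 0 1) : |jointPGF μ Z u v| ≤ 1 := by
  unfold jointPGF
  simpa using norm_integral_le_of_norm_le_const (μ := μ) (C := 1)
    (f := fun ω => u ^ (Z ω).1 * v ^ (Z ω).2)
    (ae_of_all _ fun ω => abs_pow_mul_pow_le_one hu hv (Z ω).1 (Z ω).2)

theorem hasSum_jointPGF_mul_pow [IsProbabilityMeasure μ] {Z : ℕ → Ω → ℕ × ℕ}
    (hZ : ∀ t, Measurable (Z t)) (hu : u ∈ Icc 0 1) (hv : v ∈ Icc 0 1) {z : ℝ}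
    (hz : z ∈ Ico 0 1) :
    HasSum (fun t => jointPGF μ (Z t) u v * z ^ t)
      (∑' t, (∑' n, ∑' m, μ.real {ω | (Z t ω).1 = n ∧ (Z t ω).2 = m} * u ^ n * v ^ m) * z ^ t) := by
  simp only [(hasSum_jointPGF (hZ _) hu hv).tsum_eq]
  refine (Summable.of_norm_bounded (summable_geometric_of_lt_one hz.1 hz.2) fun t => ?_).hasSum
  rw [norm_mul, norm_pow, Real.norm_of_nonneg hz.1, Real.norm_eq_abs]
  exact mul_le_of_le_one_left (pow_nonneg hz.1 t) (abs_jointPGF_le_one (Z t) hu hv)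

theorem integral_pow_eq_tsum [IsFiniteMeasure μ] {N : Ω → ℕ} (hN : Measurable N)
    (hu : u ∈ Icc 0 1) : ∫ ω, u ^ N ω ∂μ = ∑' n, μ.real {ω | N ω = n} * u ^ n :=
  (hasSum_measureReal_mul_of_integrable hN (integrable_of_countable_of_abs_le (μ.map N) fun n => by
    rw [abs_of_nonneg (pow_nonneg hu.1 n)]; exact pow_le_one₀ hu.1 hu.2)).tsum_eq.symm

theorem jointPGF_prodMk [IsFiniteMeasure μ] {M N : Ω → ℕ} (hM : Measurable M)
    (hN : Measurable N) (h : IndepFun M N μ) (hu : u ∈ Icc 0 1) (hv : v ∈ Icc 0 1) :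
    jointPGF μ (fun ω => (M ω, N ω)) u v
      = (∑' n, μ.real {ω | M ω = n} * u ^ n) * ∑' m, μ.real {ω | N ω = m} * v ^ m := by
  rw [← integral_pow_eq_tsum hM hu, ← integral_pow_eq_tsum hN hv]
  exact h.integral_fun_comp_mul_comp hM.aemeasurable hN.aemeasurable
    (measurable_of_countable _).aestronglyMeasurable
    (measurable_of_countable _).aestronglyMeasurable

theorem IdentDistrib.jointPGF_eq {Ω' : Type*} {mΩ' : MeasurableSpace Ω'} {ν : Measure Ω'}
    {Z : Ω → ℕ × ℕ} {W : Ω' → ℕ × ℕ} (h : IdentDistrib Z W μ ν) :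
    jointPGF μ Z u v = jointPGF ν W u v :=
  (h.comp (measurable_of_countable fun p : ℕ × ℕ => u ^ p.1 * v ^ p.2)).integral_eq

theorem jointPGF_add {Z W : Ω → ℕ × ℕ} (hZ : Measurable Z) (hW : Measurable W)
    (h : IndepFun Z W μ) : jointPGF μ (Z + W) u v = jointPGF μ Z u v * jointPGF μ W u v := by
  calc jointPGF μ (Z + W) u v
      = ∫ ω, u ^ (Z ω).1 * v ^ (Z ω).2 * (u ^ (W ω).1 * v ^ (W ω).2) ∂μ := by
        unfold jointPGF
        congr 1 with ω
        simp only [Pi.add_apply, Prod.fst_add, Prod.snd_add, pow_add]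
        ring
    _ = _ := h.integral_fun_comp_mul_comp (f := fun p : ℕ × ℕ => u ^ p.1 * v ^ p.2)
        (g := fun p : ℕ × ℕ => u ^ p.1 * v ^ p.2) hZ.aemeasurable hW.aemeasurable
        (measurable_of_countable _).aestronglyMeasurable
        (measurable_of_countable _).aestronglyMeasurable

theorem jointPGF_serve [IsFiniteMeasure μ] {Z : Ω → ℕ × ℕ} (hZ : Measurable Z)
    (hu : u ∈ Ioc 0 1) (hv : v ∈ Ioc 0 1) :
    jointPGF μ (serve ∘ Z) u v = jointPGF μ Z u v / u + jointPGF μ Z 0 v * (1 / v - 1 / u)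
      + jointPGF μ Z 0 0 * (1 - 1 / v) := by
  have h0 : (0 : ℝ) ∈ Icc 0 1 := ⟨le_rfl, zero_le_one⟩
  have huv := integrable_pow_mul_pow (μ := μ) hZ (Ioc_subset_Icc_self hu) (Ioc_subset_Icc_self hv)
  have h0v := integrable_pow_mul_pow (μ := μ) hZ h0 (Ioc_subset_Icc_self hv)
  have h00 := integrable_pow_mul_pow (μ := μ) hZ h0 h0
  unfold jointPGF
  simp only [Function.comp_apply, pow_mul_pow_serve hu.1.ne' hv.1.ne']
  rw [integral_add, integral_add, integral_div, integral_mul_const, integral_mul_const]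
  exacts [huv.div_const u, h0v.mul_const _, (huv.div_const u).add (h0v.mul_const _),
    h00.mul_const _]

theorem jointPGF_succ_of_serve_add [IsFiniteMeasure μ] {ξ Z : ℕ → Ω → ℕ × ℕ}
    (hξ : ∀ t, Measurable (ξ t)) (hind : iIndepFun ξ μ) {z₀ : ℕ × ℕ} (h0 : Z 0 = fun _ => z₀)
    (hrec : ∀ t ω, Z (t + 1) ω = serve (Z t ω) + ξ (t + 1) ω) (hu : u ∈ Ioc 0 1)
    (hv : v ∈ Ioc 0 1) (t : ℕ) :
    jointPGF μ (Z (t + 1)) u v = jointPGF μ (ξ (t + 1)) u v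
      * (jointPGF μ (Z t) u v / u + jointPGF μ (Z t) 0 v * (1 / v - 1 / u)
        + jointPGF μ (Z t) 0 0 * (1 - 1 / v)) := by
  have hF : Measurable (Function.uncurry fun p q : ℕ × ℕ => serve p + q) :=
    measurable_of_countable _
  have hZ := measurable_of_recursion hξ hF h0 hrec t
  have hserve : Measurable serve := measurable_of_countable serve
  rw [show Z (t + 1) = serve ∘ Z t + ξ (t + 1) from funext (hrec t),
    jointPGF_add (hserve.comp hZ) (hξ (t + 1))
      ((indepFun_of_recursion hξ hind hF h0 hrec t).comp hserve measurable_id),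
    jointPGF_serve hZ hu hv, mul_comm]

end JointPGF

theorem HasSum.eq_add_of_succ_eq {g g₁ g₂ : ℕ → ℝ} {z s s₁ s₂ c₀ c₁ c₂ : ℝ}
    (hg : HasSum (fun t => g t * z ^ t) s) (hg₁ : HasSum (fun t => g₁ t * z ^ t) s₁)
    (hg₂ : HasSum (fun t => g₂ t * z ^ t) s₂)
    (hrec : ∀ t, g (t + 1) = c₀ * g t + c₁ * g₁ t + c₂ * g₂ t) :
    s = g 0 + z * (c₀ * s + c₁ * s₁ + c₂ * s₂) := by
  have htail := (hasSum_nat_add_iff' 1).mpr hg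
  simp only [Finset.range_one, Finset.sum_singleton, pow_zero, mul_one] at htail
  have hnext : HasSum (fun t => g (t + 1) * z ^ (t + 1)) (z * (c₀ * s + c₁ * s₁ + c₂ * s₂)) :=
    ((((hg.mul_left c₀).add (hg₁.mul_left c₁)).add (hg₂.mul_left c₂)).mul_left z).congr_fun
      fun t => by rw [hrec, pow_succ]; ring
  linarith [htail.unique hnext]

/-- priority queue functional equation: for a single-server queue with two
independent i.i.d. arrival flows of generating functions `A` (priority) and `B`, with state
`(X_t, Y_t)` evolving by `X_{t+1} = (X_t - 1)₊ + A_{t+1}`,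
`Y_{t+1} = (Y_t - 1_{X_t = 0})₊ + B_{t+1}`, the trivariate generating function
`Φ(u,v,z) = ∑ P(X_t = n, Y_t = m) uⁿ vᵐ zᵗ` satisfies
`Φ(u,v,z)·(1 - z·A(u)·B(v)/u)
  = 1 - z·A(u)·B(v)·[Φ(0,v,z)·(1/u - 1/v) + Φ(0,0,z)·(1/v - 1)]`. -/
theorem priority_queue_functional_equation {Ω : Type*} [MeasurableSpace Ω] (μ : Measure Ω)
    [IsProbabilityMeasure μ]
    (A B : ℕ → Ω → ℕ) (hAmeas : ∀ t, Measurable (A t)) (hBmeas : ∀ t, Measurable (B t))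
    (hindep : iIndepFun (fun t ω => (A t ω, B t ω)) μ)
    (hAB : ∀ t, IndepFun (A t) (B t) μ)
    (hid : ∀ t, μ.map (fun ω => (A t ω, B t ω)) = μ.map (fun ω => (A 0 ω, B 0 ω)))
    (X Y : ℕ → Ω → ℕ)
    (hX0 : ∀ ω, X 0 ω = 0) (hY0 : ∀ ω, Y 0 ω = 0)
    (hXrec : ∀ t ω, X (t + 1) ω = (X t ω - 1) + A (t + 1) ω)
    (hYrec : ∀ t ω, Y (t + 1) ω = (Y t ω - (if X t ω = 0 then 1 else 0)) + B (t + 1) ω)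
    (a b : ℕ → ℝ)
    (ha : ∀ n, a n = (μ {ω | A 0 ω = n}).toReal)
    (hb : ∀ n, b n = (μ {ω | B 0 ω = n}).toReal)
    (Φ : ℝ → ℝ → ℝ → ℝ)
    (hΦ : ∀ u v z, Φ u v z
      = ∑' t : ℕ,
          (∑' n : ℕ, ∑' m : ℕ,
            (μ {ω | X t ω = n ∧ Y t ω = m}).toReal * u ^ n * v ^ m) * z ^ t) :
    ∀ u ∈ Set.Ioo (0 : ℝ) 1, ∀ v ∈ Set.Ioo (0 : ℝ) 1, ∀ z ∈ Set.Ioo (0 : ℝ) 1,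
      Φ u v z * (1 - z * (∑' n, a n * u ^ n) * (∑' m, b m * v ^ m) / u)
        = 1 - z * (∑' n, a n * u ^ n) * (∑' m, b m * v ^ m)
            * (Φ 0 v z * (1 / u - 1 / v) + Φ 0 0 z * (1 / v - 1)) := by
  intro u hu v hv z hz
  set ξ : ℕ → Ω → ℕ × ℕ := fun t ω => (A t ω, B t ω)
  set Z : ℕ → Ω → ℕ × ℕ := fun t ω => (X t ω, Y t ω)
  have hξ (t : ℕ) : Measurable (ξ t) := (hAmeas t).prodMk (hBmeas t)
  have hZ0 : Z 0 = fun _ => (0, 0) := funext fun ω => by simp [Z, hX0, hY0]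
  have hrec (t : ℕ) (ω : Ω) : Z (t + 1) ω = serve (Z t ω) + ξ (t + 1) ω := by
    simp [Z, ξ, serve, hXrec, hYrec]
  have hZ := measurable_of_recursion (F := fun p q => serve p + q) hξ
    (measurable_of_countable _) hZ0 hrec
  have h0 : (0 : ℝ) ∈ Icc 0 1 := ⟨le_rfl, zero_le_one⟩
  have hseries {u' v' : ℝ} (hu' : u' ∈ Icc 0 1) (hv' : v' ∈ Icc 0 1) :
      HasSum (fun t => jointPGF μ (Z t) u' v' * z ^ t) (Φ u' v' z) := by
    rw [hΦ]
    exact hasSum_jointPGF_mul_pow hZ hu' hv' (Ioo_subset_Ico_self hz)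
  set c := (∑' n, a n * u ^ n) * (∑' m, b m * v ^ m) with hc
  have hstep (t : ℕ) : jointPGF μ (Z (t + 1)) u v = c / u * jointPGF μ (Z t) u v
      + c * (1 / v - 1 / u) * jointPGF μ (Z t) 0 v + c * (1 - 1 / v) * jointPGF μ (Z t) 0 0 := by
    rw [jointPGF_succ_of_serve_add hξ hindep hZ0 hrec (Ioo_subset_Ioc_self hu)
        (Ioo_subset_Ioc_self hv),
      IdentDistrib.jointPGF_eq ⟨(hξ _).aemeasurable, (hξ 0).aemeasurable, hid _⟩,
      jointPGF_prodMk (hAmeas 0) (hBmeas 0) (hAB 0) (Ioo_subset_Icc_self hu)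
        (Ioo_subset_Icc_self hv)]
    simp only [hc, ha, hb, measureReal_def]
    ring
  have key := (hseries (Ioo_subset_Icc_self hu) (Ioo_subset_Icc_self hv)).eq_add_of_succ_eq
    (hseries h0 (Ioo_subset_Icc_self hv)) (hseries h0 h0) hstep
  rw [hZ0, hc] at key
  simp only [jointPGF, pow_zero, mul_one, integral_const, probReal_univ, smul_eq_mul] at key
  linear_combination key
end
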